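/- Let (X, d) be a compact metric space equipped with a finite Borel measure μ. Let ℓ be a positive integer and let ε > 0 and r > 0. Then there exist ε̄ > 0 and r̄ > 0, depending only on ε, r, ℓ and (X, d, μ) but not on f, with the following property: for every nonnegative function f ∈ L¹(X, μ) with ∫_X f dμ = 1 and such that ∫_{⋃_{i=1}^{ℓ} B_r(p_i)} f dμ < 1 − ε for every ℓ-tuple of points p₁, …, p_ℓ ∈ X, there exist ℓ + 1 points p̄₁, …, p̄_{ℓ+1} ∈ X (depending on f) such that ∫_{B_{r̄}(p̄_i)} f dμ > ε̄ for every i = 1, …, ℓ+1, and B_{2r̄}(p̄_i) ∩ B_{2r̄}(p̄_j) = ∅ for i ≠ j. -/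

import Mathlib

/-!
Cover `X` by finitely many, say `N`, balls of radius `r / 5`, and view `f` as the measure
`ν = f μ`. Given at most `ℓ` points, the `r`-balls around them carry `ν`-mass less than
`1 - ε`, so their complement carries mass more than `ε`; by pigeonhole one of the `N` small
balls carries mass more than `ε / (N + 1)` of that complement. Its centre is at distance at
least `r - r / 5 = 4 r / 5` from each given point. Starting from no points and repeating
`ℓ + 1` times gives heavy balls whose centres are `4 r / 5`-separated, so their doubles are
disjoint.
-/

open MeasureTheory Metric Finset

theorem Pairwise.fin_snoc {α : Type*} {r : α → α → Prop} (hr : ∀ a b, r a b → r b a) {k : ℕ}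
    {p : Fin k → α} {z : α} (hp : Pairwise fun i j => r (p i) (p j)) (hz : ∀ i, r (p i) z) :
    Pairwise fun i j =>
      r (Fin.snoc (α := fun _ => α) p z i) (Fin.snoc (α := fun _ => α) p z j) := by
  intro i j hij
  induction i using Fin.lastCases <;> induction j using Fin.lastCases
  · exact absurd rfl hij
  · simpa using hr _ _ (hz _)
  · simpa using hz _
  · simpa using hp (ne_of_apply_ne Fin.castSucc hij)

section Cover

variable {X : Type*} [PseudoMetricSpace X] [MeasurableSpace X] (ν : Measure X) {T : Finset X}
  {ρ : ℝ} (hT : Set.univ ⊆ ⋃ z ∈ T, ball z ρ) {δ : ENNReal}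
include hT

theorem exists_lt_measure_ball_inter_of_cover {s : Set X} (h : #T * δ < ν s) :
    ∃ z ∈ T, δ < ν (ball z ρ ∩ s) := by
  have hs : s ⊆ ⋃ z ∈ T, ball z ρ ∩ s := by
    simpa only [← Set.iUnion₂_inter, Set.univ_inter] using Set.inter_subset_inter_left s hT
  refine exists_lt_of_sum_lt ?_
  calc ∑ _ ∈ T, δ = #T * δ := by rw [sum_const, nsmul_eq_mul]
    _ < ν s := h
    _ ≤ ∑ z ∈ T, ν (ball z ρ ∩ s) := (measure_mono hs).trans (measure_biUnion_finset_le T _)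

theorem exists_lt_measure_ball_far_of_cover {ι : Type*} (c : ι → X) {R : ℝ}
    (h : #T * δ < ν (⋃ i, ball (c i) R)ᶜ) :
    ∃ z, δ < ν (ball z ρ) ∧ ∀ i, R - ρ ≤ dist (c i) z := by
  obtain ⟨z, -, hz⟩ := exists_lt_measure_ball_inter_of_cover ν hT h
  obtain ⟨x, hxz, hxc⟩ := nonempty_of_measure_ne_zero (ne_bot_of_gt hz)
  refine ⟨z, hz.trans_le (measure_mono Set.inter_subset_left), fun i => ?_⟩
  have hcx : R ≤ dist (c i) x := not_lt.1 fun h => hxc (Set.mem_iUnion.2 ⟨i, mem_ball'.2 h⟩)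
  linarith [dist_triangle (c i) z x, mem_ball'.1 hxz]

theorem exists_separated_lt_measure_ball_of_cover [Nonempty X] {ℓ : ℕ} {R : ℝ}
    (h : ∀ p : Fin ℓ → X, #T * δ < ν (⋃ i, ball (p i) R)ᶜ) :
    ∀ k ≤ ℓ + 1, ∃ p : Fin k → X, (∀ i, δ < ν (ball (p i) ρ)) ∧
      Pairwise fun i j => R - ρ ≤ dist (p i) (p j) := by
  intro k hk
  induction k with
  | zero => exact ⟨Fin.elim0, fun i => i.elim0, fun i => i.elim0⟩
  | succ k ih =>
    obtain ⟨p, hp, hsep⟩ := ih (by omega)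
    have hkℓ : k ≤ ℓ := by omega
    set q : Fin ℓ → X := Function.extend (Fin.castLE hkℓ) p fun _ => Classical.arbitrary X
    obtain ⟨z, hz, hfar⟩ := exists_lt_measure_ball_far_of_cover ν hT q (h q)
    refine ⟨Fin.snoc p z, Fin.lastCases (by simpa using hz) (by simpa using hp), ?_⟩
    refine hsep.fin_snoc (r := fun x y => R - ρ ≤ dist x y) (fun _ _ h => by rwa [dist_comm])
      fun i => ?_
    simpa [q, (Fin.castLE_injective hkℓ).extend_apply] using hfar (Fin.castLE hkℓ i)

end Cover

theorem withDensity_ofReal_apply {X : Type*} [MeasurableSpace X] {μ : Measure X} {f : X → ℝ}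
    (hf : Integrable f μ) (hf0 : 0 ≤ᵐ[μ] f) {s : Set X} (hs : MeasurableSet s) :
    μ.withDensity (fun x => ENNReal.ofReal (f x)) s = ENNReal.ofReal (∫ x in s, f x ∂μ) := by
  rw [withDensity_apply _ hs,
    ofReal_integral_eq_lintegral_ofReal hf.integrableOn (ae_restrict_of_ae hf0)]

theorem concentration_alternative_general
    {X : Type*} [MetricSpace X] [CompactSpace X]
    [MeasurableSpace X] [BorelSpace X]
    (μ : Measure X)
    (ℓ : ℕ) (ε r : ℝ) (hε : 0 < ε) (hr : 0 < r) :
    ∃ εb > (0 : ℝ), ∃ rb > (0 : ℝ),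
      ∀ f : X → ℝ, (∀ x, 0 ≤ f x) → Integrable f μ → (∫ x, f x ∂μ) = 1 →
        (∀ p : Fin ℓ → X, (∫ x in ⋃ i, ball (p i) r, f x ∂μ) < 1 - ε) →
        ∃ p : Fin (ℓ + 1) → X,
          (∀ i, εb < ∫ x in ball (p i) rb, f x ∂μ) ∧
          ∀ i j, i ≠ j → ball (p i) (2 * rb) ∩ ball (p j) (2 * rb) = ∅ := by
  obtain ⟨t, -, ht, hT⟩ := isCompact_univ.finite_cover_balls (X := X) (by positivity : 0 < r / 5)
  lift t to Finset X using ht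
  rw [Finset.set_biUnion_coe] at hT
  -- `+ 1` keeps `εb` positive when `X`, hence `t`, is empty.
  set εb := ε / (#t + 1)
  refine ⟨εb, by positivity, r / 5, by positivity, fun f hf0 hf hf1 hconc => ?_⟩
  have : Nonempty X := not_isEmpty_iff.1 fun _ => by simp [integral_of_isEmpty] at hf1
  set ν := μ.withDensity fun x => ENNReal.ofReal (f x)
  have hν : ∀ s, MeasurableSet s → ν s = ENNReal.ofReal (∫ x in s, f x ∂μ) :=
    fun s => withDensity_ofReal_apply hf (.of_forall hf0)
  have hmass : ∀ p : Fin ℓ → X, #t * ENNReal.ofReal εb < ν (⋃ i, ball (p i) r)ᶜ := by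
    intro p
    have hU : MeasurableSet (⋃ i, ball (p i) r) := .iUnion fun _ => measurableSet_ball
    have hεb : #t * εb ≤ ε := by
      rw [mul_div_assoc']
      exact div_le_of_le_mul₀ (by positivity) hε.le (by nlinarith)
    rw [hν _ hU.compl, ← ENNReal.ofReal_natCast, ← ENNReal.ofReal_mul (by positivity),
      ENNReal.ofReal_lt_ofReal_iff_of_nonneg (by positivity)]
    linarith [integral_add_compl hU hf, hconc p]
  obtain ⟨p, hheavy, hsep⟩ := exists_separated_lt_measure_ball_of_cover ν hT hmass (ℓ + 1) le_rfl
  refine ⟨p, fun i => ?_, fun i j hij => ?_⟩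
  · rw [← ENNReal.ofReal_lt_ofReal_iff_of_nonneg (by positivity), ← hν _ measurableSet_ball]
    exact hheavy i
  · exact Set.disjoint_iff_inter_eq_empty.1 (ball_disjoint_ball (by linarith [hsep hij]))

/-- Lemma 4.2 of the paper: on a compact metric measure space, if a normalized
nonnegative `L¹` density is not `(1−ε)`-concentrated near any `ℓ` points at scale `r`,
then it carries mass at least `ε̄` on `ℓ+1` balls of radius `r̄` whose doubles are
disjoint; here `ε̄, r̄` depend only on `ε, r, ℓ` and the space, not on `f`. -/
theorem concentration_alternative
    {X : Type*} [MetricSpace X] [CompactSpace X]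
    [MeasurableSpace X] [BorelSpace X]
    (μ : Measure X) [IsFiniteMeasure μ]
    (ℓ : ℕ) (hℓ : 0 < ℓ) (ε r : ℝ) (hε : 0 < ε) (hr : 0 < r) :
    ∃ εb > (0 : ℝ), ∃ rb > (0 : ℝ),
      ∀ f : X → ℝ, (∀ x, 0 ≤ f x) → Integrable f μ → (∫ x, f x ∂μ) = 1 →
        (∀ p : Fin ℓ → X, (∫ x in ⋃ i, ball (p i) r, f x ∂μ) < 1 - ε) →
        ∃ p : Fin (ℓ + 1) → X,
          (∀ i, εb < ∫ x in ball (p i) rb, f x ∂μ) ∧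
          ∀ i j, i ≠ j → ball (p i) (2 * rb) ∩ ball (p j) (2 * rb) = ∅ :=
  concentration_alternative_general μ ℓ ε r hε hr
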